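/- Let a > 0 and let γ : [0,L] → ℝ² be a C² unit-speed curve with positive geodesic curvature from (a,0) to (-a,b), whose tangent is γ'(t) = e^{iθ(t)} for a strictly increasing continuous θ with θ(0) = π/2, and assume θ(L) = 3π/2 if b > 0 and π < θ(L) ≤ 3π/2 if b ≤ 0. Then max{ k_γ(t) : t ∈ [0,L] } ≥ a⁻¹. -/

import Mathlib

open Real Set Complex

/-- Real inner product on ℂ viewed as ℝ². -/
noncomputable def inner2 (x y : ℂ) : ℝ := x.re * y.re + x.im * y.im

/-- Signed geodesic curvature of a unit-speed planar curve (J = multiplication by I). -/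
noncomputable def curvU (γ : ℝ → ℂ) (t : ℝ) : ℝ :=
  inner2 (deriv (deriv γ) t) (Complex.I * deriv γ t)

/-- Signed geodesic curvature of a regular planar curve. -/
noncomputable def curvR (γ : ℝ → ℂ) (t : ℝ) : ℝ :=
  (‖deriv γ t‖ ^ 3)⁻¹ * inner2 (deriv (deriv γ) t) (Complex.I * deriv γ t)

/-- The closed curve γ ⊕ [-a,a]: γ on [0,L] followed by the segment from (-a,0) to (a,0). -/
noncomputable def concatSeg (γ : ℝ → ℂ) (L a : ℝ) : ℝ → ℂ :=
  fun t => if t ≤ L then γ t else Complex.ofReal (-a + (t - L))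

/-!
Suppose `k_γ < 1/a` on `[0, L]` and put `α = θ(L) - 3π/2 ∈ (-π/2, 0]`. By the Frenet equation
`γ'' = k_γ · iγ'`, the point `c(t) = γ(t) + a·iγ'(t)` at distance `a` along the normal moves with
velocity `(1 - a k_γ) γ'`. Since `θ - α` stays in `(π/2, 3π/2)`, the component of `c` along
`e^{iα}` is strictly decreasing. But it vanishes at `t = 0` (where `c(0) = 0`) and equals
`a (1 - cos α) + b sin α ≥ 0` at `t = L`.
-/

open Topology

theorem inner2_eq_real_inner (x y : ℂ) : inner2 x y = inner ℝ x y := by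
  rw [Complex.inner, inner2, Complex.mul_re, Complex.conj_re, Complex.conj_im]
  ring

theorem inner2_eq_zero_of_norm_eventually_const {f : ℝ → ℂ} {f' : ℂ} {t c : ℝ}
    (hf : HasDerivAt f f' t) (hnorm : ∀ᶠ s in 𝓝 t, ‖f s‖ = c) : inner2 (f t) f' = 0 := by
  have hconst : HasDerivAt (‖f ·‖ ^ 2) 0 t :=
    (hasDerivAt_const t (c ^ 2)).congr_of_eventuallyEq (hnorm.mono fun s hs => by simp only [hs])
  have := hf.norm_sq.unique hconst
  rw [inner2_eq_real_inner]
  linarith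

theorem eq_inner2_mul_I_mul_of_inner2_eq_zero {u v : ℂ} (hu : ‖u‖ = 1) (h : inner2 u v = 0) :
    v = inner2 v (I * u) * (I * u) := by
  have hsq : u.re ^ 2 + u.im ^ 2 = 1 := by
    have := Complex.normSq_eq_norm_sq u
    rw [Complex.normSq_apply, hu] at this
    linear_combination this
  simp only [inner2] at h
  apply Complex.ext <;>
    simp only [inner2, Complex.mul_re, Complex.mul_im, Complex.I_re, Complex.I_im,
      Complex.ofReal_re, Complex.ofReal_im]
  · linear_combination u.re * h - v.re * hsq
  · linear_combination u.im * h - v.im * hsq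

theorem hasDerivAt_add_mul_I_mul_deriv {γ : ℝ → ℂ} {a t : ℝ}
    (hγ : DifferentiableAt ℝ γ t) (hγ' : DifferentiableAt ℝ (deriv γ) t)
    (hunit : ∀ᶠ s in 𝓝 t, ‖deriv γ s‖ = 1) :
    HasDerivAt (fun s => γ s + a * I * deriv γ s) ((1 - a * curvU γ t) * deriv γ t) t := by
  have hnormal : deriv (deriv γ) t = curvU γ t * (I * deriv γ t) :=
    eq_inner2_mul_I_mul_of_inner2_eq_zero hunit.self_of_nhds
      (inner2_eq_zero_of_norm_eventually_const hγ'.hasDerivAt hunit)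
  refine (hγ.hasDerivAt.add (hγ'.hasDerivAt.const_mul _)).congr_deriv ?_
  linear_combination (a * I) * hnormal + (a * curvU γ t * deriv γ t) * I_sq

theorem re_exp_mul_I_mul_exp_neg_mul_I (θ α : ℝ) :
    (exp (θ * I) * exp (-α * I)).re = Real.cos (θ - α) := by
  rw [← Complex.exp_add, show (θ : ℂ) * I + -α * I = ((θ - α : ℝ) : ℂ) * I by push_cast; ring,
    exp_ofReal_mul_I_re]

theorem strictAntiOn_re_add_mul_I_mul_deriv_mul_exp {γ : ℝ → ℂ} {θ : ℝ → ℝ} {a α t₀ t₁ : ℝ}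
    (hγ : ContDiff ℝ 2 γ) (hθ : ∀ t ∈ Ioo t₀ t₁, deriv γ t = exp (θ t * I))
    (hcurv : ∀ t ∈ Ioo t₀ t₁, a * curvU γ t < 1)
    (hθα : ∀ t ∈ Ioo t₀ t₁, θ t - α ∈ Ioo (π / 2) (3 * π / 2)) :
    StrictAntiOn (fun t => ((γ t + a * I * deriv γ t) * exp (-α * I)).re) (Icc t₀ t₁) := by
  have hγ' : Differentiable ℝ (deriv γ) := hγ.differentiable_deriv_two
  have hcont : Continuous fun t => ((γ t + a * I * deriv γ t) * exp (-α * I)).re :=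
    continuous_re.comp ((hγ.continuous.add (continuous_const.mul hγ'.continuous)).mul
      continuous_const)
  refine strictAntiOn_of_deriv_neg (convex_Icc t₀ t₁) hcont.continuousOn fun t ht => ?_
  rw [interior_Icc] at ht
  have hunit : ∀ᶠ s in 𝓝 t, ‖deriv γ s‖ = 1 :=
    Filter.mem_of_superset (Ioo_mem_nhds ht.1 ht.2) fun s hs => by
      show ‖deriv γ s‖ = 1
      rw [hθ s hs, norm_exp_ofReal_mul_I]
  have hderiv : HasDerivAt (fun s => ((γ s + a * I * deriv γ s) * exp (-α * I)).re)
      ((1 - a * curvU γ t) * Real.cos (θ t - α)) t := by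
    have h := (hasDerivAt_add_mul_I_mul_deriv (a := a) (hγ.differentiable (by norm_num) t)
      (hγ' t) hunit).mul_const (exp (-α * I))
    refine (reCLM.hasFDerivAt.comp_hasDerivAt t h).congr_deriv ?_
    rw [reCLM_apply, ← ofReal_one, ← ofReal_mul, ← ofReal_sub, mul_assoc, re_ofReal_mul,
      hθ t ht, re_exp_mul_I_mul_exp_neg_mul_I]
  obtain ⟨hlo, hhi⟩ := hθα t ht
  rw [hderiv.deriv]
  exact mul_neg_of_pos_of_neg (sub_pos.2 (hcurv t ht))
    (Real.cos_neg_of_pi_div_two_lt_of_lt hlo (by linarith))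

theorem stmt4_general (a b L : ℝ) (ha : 0 < a) (hL : 0 < L) (γ : ℝ → ℂ) (θ : ℝ → ℝ)
    (hγ : ContDiff ℝ 2 γ)
    (h0 : γ 0 = (a : ℂ)) (h1 : γ L = Complex.mk (-a) b)
    (hθmono : StrictMonoOn θ (Icc 0 L))
    (hθlift : ∀ t ∈ Icc 0 L, deriv γ t = Complex.exp ((θ t : ℂ) * Complex.I))
    (hθ0 : θ 0 = π / 2)
    (hpos : 0 < b → θ L = 3 * π / 2)
    (hneg : b ≤ 0 → π < θ L ∧ θ L ≤ 3 * π / 2) :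
    ∃ t ∈ Icc 0 L, a⁻¹ ≤ curvU γ t := by
  by_contra! hsmall
  set α := θ L - 3 * π / 2 with hα
  have hα_nonpos : α ≤ 0 := by
    rcases lt_or_ge 0 b with hb | hb
    · linarith [hpos hb]
    · linarith [hneg hb]
  have hb_sin : 0 ≤ b * Real.sin α := by
    rcases lt_or_ge 0 b with hb | hb
    · simp [hα, hpos hb]
    · exact mul_nonneg_of_nonpos_of_nonpos hb
        (Real.sin_nonpos_of_nonpos_of_neg_pi_le hα_nonpos (by linarith [hneg hb, pi_pos]))
  have h0L : (0 : ℝ) ∈ Icc 0 L := left_mem_Icc.2 hL.le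
  have hLL : L ∈ Icc 0 L := right_mem_Icc.2 hL.le
  have hanti := strictAntiOn_re_add_mul_I_mul_deriv_mul_exp (a := a) (α := α) hγ
    (fun t ht => hθlift t (Ioo_subset_Icc_self ht))
    (fun t ht => by
      simpa [ha.ne'] using mul_lt_mul_of_pos_left (hsmall t (Ioo_subset_Icc_self ht)) ha)
    (fun t ht => by
      have := hθmono h0L (Ioo_subset_Icc_self ht) ht.1
      have := hθmono (Ioo_subset_Icc_self ht) hLL ht.2
      constructor <;> linarith)
  have hval0 : ((γ 0 + a * I * deriv γ 0) * exp (-α * I)).re = 0 := by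
    rw [hθlift 0 h0L, hθ0, h0]
    simp [exp_pi_div_two_mul_I]
  have hvalL : ((γ L + a * I * deriv γ L) * exp (-α * I)).re
      = a * (1 - Real.cos α) + b * Real.sin α := by
    rw [hθlift L hLL, h1, show θ L = α + 3 * π / 2 by ring, ← ofReal_neg, exp_ofReal_mul_I,
      exp_ofReal_mul_I]
    have hc : Real.cos (3 * π / 2) = 0 := by
      rw [show 3 * π / 2 = π / 2 + π by ring, Real.cos_add_pi, Real.cos_pi_div_two, neg_zero]
    have hs : Real.sin (3 * π / 2) = -1 := by
      rw [show 3 * π / 2 = π / 2 + π by ring, Real.sin_add_pi, Real.sin_pi_div_two]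
    simp only [Real.cos_add, Real.sin_add, Real.cos_neg, Real.sin_neg, hc, hs, mul_re, mul_im,
      add_re, add_im, ofReal_re, ofReal_im, I_re, I_im]
    linear_combination a * Real.sin_sq_add_cos_sq α
  have hdecr := hanti h0L hLL hL
  simp only [hval0, hvalL] at hdecr
  linarith [mul_nonneg ha.le (sub_nonneg.2 (Real.cos_le_one α))]

theorem stmt4 (a b L : ℝ) (ha : 0 < a) (hL : 0 < L) (γ : ℝ → ℂ) (θ : ℝ → ℝ)
    (hγ : ContDiff ℝ 2 γ)
    (hunit : ∀ t ∈ Icc 0 L, ‖deriv γ t‖ = 1)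
    (hcurv : ∀ t ∈ Icc 0 L, 0 < curvU γ t)
    (h0 : γ 0 = (a : ℂ)) (h1 : γ L = Complex.mk (-a) b)
    (hθcont : ContinuousOn θ (Icc 0 L))
    (hθmono : StrictMonoOn θ (Icc 0 L))
    (hθlift : ∀ t ∈ Icc 0 L, deriv γ t = Complex.exp ((θ t : ℂ) * Complex.I))
    (hθ0 : θ 0 = π / 2)
    (hpos : 0 < b → θ L = 3 * π / 2)
    (hneg : b ≤ 0 → π < θ L ∧ θ L ≤ 3 * π / 2) :
    ∃ t ∈ Icc 0 L, a⁻¹ ≤ curvU γ t :=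
  stmt4_general a b L ha hL γ θ hγ h0 h1 hθmono hθlift hθ0 hpos hneg
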